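/- Let α, γ > 0, let z_k = (2k+1+iα)/γ for k ∈ ℤ, let m ∈ ℤ, and let w = (1/γ)·(2m + i·α√(1+α²)/(√(1+α²)+1)). Then |(w−z_k)/(w−conj z_k)| ≥ 1/√(1+2α²) for every k ∈ ℤ, with equality for k = m and k = m−1; consequently the pseudohyperbolic distance from w to the zero set {z_k : k ∈ ℤ} equals exactly 1/√(1+2α²). -/

import Mathlib

open Complex

/-- The zero `z_k = (2k+1+iα)/γ` of the Blaschke product `B_{α,γ}`. -/
noncomputable def zk (α γ : ℝ) (k : ℤ) : ℂ :=
  ((2 * (k : ℂ) + 1) + (α : ℂ) * Complex.I) / (γ : ℂ)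

/-!
Write `w = (2m + iβ)/γ`. Then `γ(w - z_k) = n + i(β - α)` and `γ(w - conj z_k) = n + i(β + α)`
with `n = 2(m - k) - 1` odd, so the squared pseudohyperbolic distance is
`(n² + (β - α)²) / (n² + (β + α)²)`, which increases with `n²` and is smallest at `n = ±1`,
i.e. at `k = m` and `k = m - 1`. The height `β = α√(1+α²)/(√(1+α²)+1)` is exactly the one for
which `1 + (β + α)² = (1 + 2α²)(1 + (β - α)²)`, so that this smallest value is `1/(1 + 2α²)`.
-/

lemma one_add_sq_add_eq_mul_one_add_sq_sub (α : ℝ) :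
    1 + (α * √(1 + α ^ 2) / (√(1 + α ^ 2) + 1) + α) ^ 2 =
      (1 + 2 * α ^ 2) * (1 + (α * √(1 + α ^ 2) / (√(1 + α ^ 2) + 1) - α) ^ 2) := by
  have hs : √(1 + α ^ 2) ^ 2 = 1 + α ^ 2 := Real.sq_sqrt (by positivity)
  have hs1 : √(1 + α ^ 2) + 1 ≠ 0 := by positivity
  field_simp
  linear_combination 2 * α ^ 2 * hs

lemma one_le_sq_two_mul_intCast_sub_one (n : ℤ) : 1 ≤ (2 * (n : ℝ) - 1) ^ 2 := by
  have hn : 0 ≤ n * (n - 1) := by rcases le_or_gt n 0 with h | h <;> nlinarith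
  have : (1 : ℤ) ≤ (2 * n - 1) ^ 2 := by linear_combination 4 * hn
  exact_mod_cast this

lemma one_div_sqrt_le_sqrt_div_sqrt {α β : ℝ}
    (hβ : 1 + (β + α) ^ 2 = (1 + 2 * α ^ 2) * (1 + (β - α) ^ 2)) {x : ℝ} (hx : 1 ≤ x ^ 2) :
    1 / √(1 + 2 * α ^ 2) ≤ √(x ^ 2 + (β - α) ^ 2) / √(x ^ 2 + (β + α) ^ 2) := by
  have hden : 0 < x ^ 2 + (β + α) ^ 2 := by positivity
  rw [div_le_div_iff₀ (by positivity) (Real.sqrt_pos.2 hden), one_mul,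
    ← Real.sqrt_mul (by positivity)]
  apply Real.sqrt_le_sqrt
  linear_combination hβ + mul_le_mul_of_nonneg_left hx (by positivity : (0 : ℝ) ≤ 2 * α ^ 2)

lemma sqrt_div_sqrt_eq_one_div_sqrt {α β : ℝ}
    (hβ : 1 + (β + α) ^ 2 = (1 + 2 * α ^ 2) * (1 + (β - α) ^ 2)) :
    √(1 + (β - α) ^ 2) / √(1 + (β + α) ^ 2) = 1 / √(1 + 2 * α ^ 2) := by
  rw [hβ, Real.sqrt_mul (by positivity), div_eq_div_iff (by positivity) (by positivity),
    one_mul, mul_comm]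

lemma norm_sub_zk_div_sub_conj_zk (α β : ℝ) {γ : ℝ} (hγ : γ ≠ 0) (m k : ℤ) :
    ‖((2 * m + β * I) / γ - zk α γ k) / ((2 * m + β * I) / γ - starRingEnd ℂ (zk α γ k))‖ =
      √((2 * ((m - k : ℤ) : ℝ) - 1) ^ 2 + (β - α) ^ 2) /
        √((2 * ((m - k : ℤ) : ℝ) - 1) ^ 2 + (β + α) ^ 2) := by
  have hnum : (2 * m + β * I) / γ - zk α γ k =
      (((2 * ((m - k : ℤ) : ℝ) - 1 : ℝ) : ℂ) + ((β - α : ℝ) : ℂ) * I) / γ := by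
    rw [zk, div_sub_div_same]
    push_cast
    ring
  have hden : (2 * m + β * I) / γ - starRingEnd ℂ (zk α γ k) =
      (((2 * ((m - k : ℤ) : ℝ) - 1 : ℝ) : ℂ) + ((β + α : ℝ) : ℂ) * I) / γ := by
    simp only [zk, map_div₀, map_add, map_mul, map_one, map_ofNat, map_intCast, conj_I,
      conj_ofReal]
    rw [div_sub_div_same]
    push_cast
    ring
  rw [hnum, hden, div_div_div_cancel_right₀ (ofReal_ne_zero.2 hγ), norm_div, norm_add_mul_I,
    norm_add_mul_I]

theorem distance_from_strip_boundary_point_to_zeros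
    (α γ : ℝ) (hγ : 0 < γ) (m : ℤ) :
    (∀ k : ℤ,
      1 / Real.sqrt (1 + 2 * α ^ 2) ≤
        norm
          (((((2 * (m : ℂ)) + (↑(α * Real.sqrt (1 + α ^ 2) / (Real.sqrt (1 + α ^ 2) + 1)) : ℂ)
              * Complex.I) / (γ : ℂ)) - zk α γ k) /
           (((((2 * (m : ℂ)) + (↑(α * Real.sqrt (1 + α ^ 2) / (Real.sqrt (1 + α ^ 2) + 1)) : ℂ)
              * Complex.I) / (γ : ℂ))) - (starRingEnd ℂ) (zk α γ k)))) ∧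
    (∀ k : ℤ, k = m ∨ k = m - 1 →
      norm
          (((((2 * (m : ℂ)) + (↑(α * Real.sqrt (1 + α ^ 2) / (Real.sqrt (1 + α ^ 2) + 1)) : ℂ)
              * Complex.I) / (γ : ℂ)) - zk α γ k) /
           (((((2 * (m : ℂ)) + (↑(α * Real.sqrt (1 + α ^ 2) / (Real.sqrt (1 + α ^ 2) + 1)) : ℂ)
              * Complex.I) / (γ : ℂ))) - (starRingEnd ℂ) (zk α γ k))) =
        1 / Real.sqrt (1 + 2 * α ^ 2)) ∧
    IsLeast {d : ℝ | ∃ k : ℤ, d =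
      norm
          (((((2 * (m : ℂ)) + (↑(α * Real.sqrt (1 + α ^ 2) / (Real.sqrt (1 + α ^ 2) + 1)) : ℂ)
              * Complex.I) / (γ : ℂ)) - zk α γ k) /
           (((((2 * (m : ℂ)) + (↑(α * Real.sqrt (1 + α ^ 2) / (Real.sqrt (1 + α ^ 2) + 1)) : ℂ)
              * Complex.I) / (γ : ℂ))) - (starRingEnd ℂ) (zk α γ k)))}
      (1 / Real.sqrt (1 + 2 * α ^ 2)) := by
  have hβ := one_add_sq_add_eq_mul_one_add_sq_sub α
  set β := α * √(1 + α ^ 2) / (√(1 + α ^ 2) + 1)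
  simp only [norm_sub_zk_div_sub_conj_zk α β hγ.ne']
  have lower_bound (k : ℤ) := one_div_sqrt_le_sqrt_div_sqrt hβ
    (one_le_sq_two_mul_intCast_sub_one (m - k))
  have attained (k : ℤ) (hk : k = m ∨ k = m - 1) :
      √((2 * ((m - k : ℤ) : ℝ) - 1) ^ 2 + (β - α) ^ 2) /
        √((2 * ((m - k : ℤ) : ℝ) - 1) ^ 2 + (β + α) ^ 2) = 1 / √(1 + 2 * α ^ 2) := by
    have hn : (2 * ((m - k : ℤ) : ℝ) - 1) ^ 2 = 1 := by rcases hk with rfl | rfl <;> norm_num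
    rw [hn, sqrt_div_sqrt_eq_one_div_sqrt hβ]
  exact ⟨lower_bound, attained, ⟨⟨m, (attained m (.inl rfl)).symm⟩,
    by rintro d ⟨k, rfl⟩; exact lower_bound k⟩⟩
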